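/- arXiv:2201.09353 — 4 statements merged into one kernel-verified Lean document; each statement's English description precedes it below -/
import Mathlib

section
/- Let μ_a, μ_b, μ̂_a, μ̂_b be real numbers, n ≥ 1 a natural number, α > 0, δ ∈ (0,1), and set c_a := √(α·log(1/δ)/(2n)). Suppose |μ̂_a − μ_a| ≤ c_a, |μ̂_b − μ_b| ≤ c_b for some c_b ≥ 0, μ̂_a + c_a ≥ μ̂_b + c_b, and Δ := μ_b − μ_a > 0. Then n ≤ 2·α·log(1/δ)/Δ². -/
/-- Lemma 2 for CO-UCB: if the confidence intervals are valid, arm `a` (with `n` observations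
and confidence radius `√(α·log(1/δ)/(2n))`) has the larger upper confidence bound than arm `b`,
and `Δ := μ_b − μ_a > 0`, then `n ≤ 2·α·log(1/δ)/Δ²`. -/
theorem ucb_pull_count_bound (μa μb μha μhb cb : ℝ) (n : ℕ) (hn : 1 ≤ n)
    (α δ : ℝ) (hα : 0 < α) (hδ0 : 0 < δ) (hδ1 : δ < 1)
    (hcb : 0 ≤ cb)
    (ha : |μha - μa| ≤ Real.sqrt (α * Real.log (1 / δ) / (2 * n)))
    (hb : |μhb - μb| ≤ cb)
    (hsel : μha + Real.sqrt (α * Real.log (1 / δ) / (2 * n)) ≥ μhb + cb)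
    (hΔ : 0 < μb - μa) :
    (n : ℝ) ≤ 2 * α * Real.log (1 / δ) / (μb - μa) ^ 2 := by
  set c := Real.sqrt (α * Real.log (1 / δ) / (2 * n)) with hc
  have h1 : μha ≤ μa + c := by
    have := abs_le.mp ha
    linarith [this.2]
  have h2 : μb - cb ≤ μhb := by
    have := abs_le.mp hb
    linarith [this.2]
  have hΔc : μb - μa ≤ 2 * c := by linarith
  have hn0 : (0:ℝ) < n := by exact_mod_cast hn
  have hL : 0 < Real.log (1 / δ) := Real.log_pos (one_lt_one_div hδ0 hδ1)
  have hbase : α * Real.log (1 / δ) / (2 * n) = c ^ 2 := by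
    rw [hc, Real.sq_sqrt]
    positivity
  have heq : α * Real.log (1 / δ) = 2 * n * c ^ 2 := by
    field_simp at hbase; linarith
  have hsq : (μb - μa) ^ 2 ≤ (2 * c) ^ 2 :=
    pow_le_pow_left₀ (le_of_lt hΔ) hΔc 2
  rw [le_div_iff₀ (by positivity)]
  nlinarith
end

section
/- Let μ_a, μ_b, μ̂_a, μ̂_b be real numbers, n ≥ 1 a natural number, α > 0, δ ∈ (0,1), and suppose c_a, c_b are reals with 0 ≤ c_a ≤ √(α·log(1/δ)/(2n)) and 0 ≤ c_b ≤ √(α·log(1/δ)/(2n)). Suppose |μ̂_a − μ_a| ≤ c_a, |μ̂_b − μ_b| ≤ c_b, μ̂_a + c_a ≥ μ̂_b − c_b, and Δ := μ_b − μ_a > 0. Then n ≤ 8·α·log(1/δ)/Δ². -/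
/-- Quantitative content of the CO-AAE version of Lemma 2: if a suboptimal arm `a` has not
been eliminated by arm `b`, both confidence radii are at most `√(α·log(1/δ)/(2n))`, and
`Δ := μ_b − μ_a > 0`, then `n ≤ 8·α·log(1/δ)/Δ²`. -/
theorem aae_pull_count_bound (μa μb μha μhb ca cb : ℝ) (n : ℕ) (hn : 1 ≤ n)
    (α δ : ℝ) (hα : 0 < α) (hδ0 : 0 < δ) (hδ1 : δ < 1)
    (hca0 : 0 ≤ ca) (hca : ca ≤ Real.sqrt (α * Real.log (1 / δ) / (2 * n)))
    (hcb0 : 0 ≤ cb) (hcb : cb ≤ Real.sqrt (α * Real.log (1 / δ) / (2 * n)))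
    (ha : |μha - μa| ≤ ca) (hb : |μhb - μb| ≤ cb)
    (hnotelim : μha + ca ≥ μhb - cb)
    (hΔ : 0 < μb - μa) :
    (n : ℝ) ≤ 8 * α * Real.log (1 / δ) / (μb - μa) ^ 2 := by
  have hL : 0 < Real.log (1 / δ) := Real.log_pos (by rw [lt_div_iff₀ hδ0]; linarith)
  have hn0 : (0:ℝ) < n := by exact_mod_cast hn
  have harg : 0 ≤ α * Real.log (1 / δ) / (2 * n) := by positivity
  have ha' := abs_le.mp ha
  have hb' := abs_le.mp hb
  set r := Real.sqrt (α * Real.log (1 / δ) / (2 * n)) with hr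
  have hr0 : 0 ≤ r := Real.sqrt_nonneg _
  have hΔle : μb - μa ≤ 4 * r := by
    have : μb - μa ≤ 2 * ca + 2 * cb := by linarith [ha'.1, ha'.2, hb'.1, hb'.2]
    linarith
  have hsq : (μb - μa) ^ 2 ≤ 16 * (α * Real.log (1 / δ) / (2 * n)) := by
    have h1 : (μb - μa) ^ 2 ≤ (4 * r) ^ 2 := by
      apply sq_le_sq' <;> nlinarith
    have h2 : r ^ 2 = α * Real.log (1 / δ) / (2 * n) := Real.sq_sqrt harg
    nlinarith
  rw [le_div_iff₀ (by positivity)]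
  have : 16 * (α * Real.log (1 / δ) / (2 * n)) * n = 8 * α * Real.log (1 / δ) := by
    field_simp; ring
  nlinarith [hsq, hn0]
end

section
/- Let A be a finite set (of agents). For each j ∈ A let θ_j be a real with 0 < θ_j ≤ 1, N_j a natural number, and K_j a finite set (of arms). For each arm i let Θ_i := ∑_{j ∈ A : i ∈ K_j} θ_j, and let Θ := ∑_{j ∈ A} θ_j. Let α > 2. Then 2·∑_{j∈A} ∑_{l=1}^{N_j} ∑_{i∈K_j} (l·Θ_i/θ_j)·(θ_j/l)^α ≤ (2(α−1)/(α−2))·∑_{j∈A} |K_j|·Θ·θ_j^{α−1}. -/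
/-!
After `Θ_i ≤ Θ`, each term `(l Θ_i / θ_j) (θ_j / l)^α` is at most `Θ θ_j^(α-1) l^(-(α-1))`, so
everything reduces to the `p`-series bound `∑_{l ≥ 1} l^(-p) ≤ 1 + ∫_1^∞ x^(-p) dx = p / (p - 1)`
with `p = α - 1 > 1`.
-/

open Finset Real

theorem integral_one_rpow_neg_le {p b : ℝ} (hp : 1 < p) (hb : 1 ≤ b) :
    ∫ x in (1 : ℝ)..b, x ^ (-p) ≤ 1 / (p - 1) := by
  have hzero : (0 : ℝ) ∉ Set.uIcc 1 b := by
    rw [Set.uIcc_of_le hb]; exact fun h => by linarith [h.1]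
  rw [integral_rpow (Or.inr ⟨by linarith, hzero⟩), one_rpow,
    show -p + 1 = -(p - 1) by ring, div_neg, ← neg_div, neg_sub]
  gcongr
  linarith [rpow_nonneg (zero_le_one.trans hb) (-(p - 1))]

theorem sum_Icc_one_rpow_neg_le {p : ℝ} (hp : 1 < p) (N : ℕ) :
    ∑ l ∈ Icc 1 N, (l : ℝ) ^ (-p) ≤ p / (p - 1) := by
  rcases N with _ | n
  · simp only [Icc_eq_empty_of_lt zero_lt_one, sum_empty]
    exact div_nonneg (by linarith) (by linarith)
  have htail : ∑ k ∈ range n, ((1 : ℝ) + ↑(k + 1)) ^ (-p) ≤ 1 / (p - 1) :=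
    ((antitoneOn_rpow_Ioi_of_exponent_nonpos (by linarith)).mono
      fun x hx => by simp only [Set.mem_Ioi]; linarith [hx.1]).sum_le_integral.trans
      (integral_one_rpow_neg_le hp (by simp))
  rw [← Ico_add_one_right_eq_Icc, sum_Ico_eq_sum_range, Nat.add_sub_cancel, sum_range_succ']
  push_cast at htail ⊢
  calc ∑ k ∈ range n, ((1 : ℝ) + (k + 1)) ^ (-p) + 1 ^ (-p) ≤ 1 / (p - 1) + 1 := by
        rw [one_rpow]; gcongr
    _ = p / (p - 1) := by rw [div_add_one (sub_ne_zero.2 hp.ne')]; ring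

theorem mul_div_mul_div_rpow {x y : ℝ} (hx : 0 < x) (hy : 0 < y) (c α : ℝ) :
    y * c / x * (x / y) ^ α = c * x ^ (α - 1) * y ^ (-(α - 1)) := by
  rw [div_rpow hx.le hy.le, rpow_sub hx, rpow_one, rpow_neg hy.le, rpow_sub hy, rpow_one]
  field_simp

theorem sum_Icc_sum_mul_div_rpow_le {ι : Type*} (K : Finset ι) (c : ι → ℝ) {C θ α : ℝ}
    (hc : ∀ i ∈ K, c i ≤ C) (hC : 0 ≤ C) (hθ : 0 < θ) (hα : 2 < α) (N : ℕ) :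
    ∑ l ∈ Icc 1 N, ∑ i ∈ K, (l * c i / θ) * (θ / l) ^ α
      ≤ (α - 1) / (α - 2) * (#K * C * θ ^ (α - 1)) := by
  have hpos : ∀ l ∈ Icc 1 N, (0 : ℝ) < l := fun l hl => by
    exact_mod_cast (mem_Icc.1 hl).1
  calc ∑ l ∈ Icc 1 N, ∑ i ∈ K, (l * c i / θ) * (θ / l) ^ α
      = ∑ l ∈ Icc 1 N, ∑ i ∈ K, c i * θ ^ (α - 1) * (l : ℝ) ^ (-(α - 1)) :=
        sum_congr rfl fun l hl => sum_congr rfl fun i _ => mul_div_mul_div_rpow hθ (hpos l hl) _ _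
    _ ≤ ∑ l ∈ Icc 1 N, ∑ i ∈ K, C * θ ^ (α - 1) * (l : ℝ) ^ (-(α - 1)) := by
        gcongr with l hl i hi
        exact hc i hi
    _ = #K * C * θ ^ (α - 1) * ∑ l ∈ Icc 1 N, (l : ℝ) ^ (-(α - 1)) := by
        simp only [sum_const, nsmul_eq_mul, mul_sum]; ring_nf
    _ ≤ #K * C * θ ^ (α - 1) * ((α - 1) / (α - 1 - 1)) := by
        gcongr
        exact sum_Icc_one_rpow_neg_le (by linarith) N
    _ = (α - 1) / (α - 2) * (#K * C * θ ^ (α - 1)) := by ring_nf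

theorem type_two_decisions_bound_general {A I : Type*} [Fintype A] [DecidableEq I]
    (θ : A → ℝ) (hθ0 : ∀ j, 0 < θ j)
    (N : A → ℕ) (K : A → Finset I) (α : ℝ) (hα : 2 < α) :
    2 * ∑ j : A, ∑ l ∈ Finset.Icc 1 (N j), ∑ i ∈ K j,
        ((l : ℝ) * (∑ j' ∈ Finset.univ.filter fun j' => i ∈ K j', θ j') / θ j)
          * (θ j / (l : ℝ)) ^ α
      ≤ (2 * (α - 1) / (α - 2)) * ∑ j : A, ((K j).card : ℝ) * (∑ j' : A, θ j') * θ j ^ (α - 1) := by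
  have hΘ_nonneg : 0 ≤ ∑ j' : A, θ j' := sum_nonneg fun j _ => (hθ0 j).le
  have hΘi_le (i : I) : ∑ j' ∈ univ.filter fun j' => i ∈ K j', θ j' ≤ ∑ j' : A, θ j' :=
    sum_le_univ_sum_of_nonneg fun j => (hθ0 j).le
  calc 2 * ∑ j : A, ∑ l ∈ Icc 1 (N j), ∑ i ∈ K j,
        ((l : ℝ) * (∑ j' ∈ univ.filter fun j' => i ∈ K j', θ j') / θ j) * (θ j / (l : ℝ)) ^ α
      ≤ 2 * ∑ j : A, (α - 1) / (α - 2) * (#(K j) * (∑ j' : A, θ j') * θ j ^ (α - 1)) := by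
        gcongr with j
        exact sum_Icc_sum_mul_div_rpow_le _ _ (fun i _ => hΘi_le i) hΘ_nonneg (hθ0 j) hα _
    _ = (2 * (α - 1) / (α - 2)) * ∑ j : A, (#(K j) : ℝ) * (∑ j' : A, θ j') * θ j ^ (α - 1) := by
        rw [← mul_sum]; ring

/-- The paper's bound on `q₁` (the expected number of Type-II decisions) with `δ_t = 1/t`:
with agents `j` having action rates `θ_j ∈ (0,1]`, decision counts `N_j`, local arm sets
`K_j`, aggregate rates `Θ_i = ∑_{j : i ∈ K_j} θ_j` and `Θ = ∑_j θ_j`, and `α > 2`,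
`2·∑_j ∑_{l=1}^{N_j} ∑_{i∈K_j} (l·Θ_i/θ_j)·(θ_j/l)^α ≤ (2(α−1)/(α−2))·∑_j |K_j|·Θ·θ_j^{α−1}`. -/
theorem type_two_decisions_bound {A I : Type*} [Fintype A] [DecidableEq I]
    (θ : A → ℝ) (hθ0 : ∀ j, 0 < θ j) (hθ1 : ∀ j, θ j ≤ 1)
    (N : A → ℕ) (K : A → Finset I) (α : ℝ) (hα : 2 < α) :
    2 * ∑ j : A, ∑ l ∈ Finset.Icc 1 (N j), ∑ i ∈ K j,
        ((l : ℝ) * (∑ j' ∈ Finset.univ.filter fun j' => i ∈ K j', θ j') / θ j)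
          * (θ j / (l : ℝ)) ^ α
      ≤ (2 * (α - 1) / (α - 2)) * ∑ j : A, ((K j).card : ℝ) * (∑ j' : A, θ j') * θ j ^ (α - 1) :=
  type_two_decisions_bound_general θ hθ0 N K α hα
end

section
/- Let P and Q be probability measures on a measurable space Ω and let A ⊆ Ω be a measurable set. Then P(A) + Q(Aᶜ) ≥ (1/2)·exp(−KL(P‖Q)), where KL(P‖Q) denotes the Kullback–Leibler divergence of P with respect to Q (equal to +∞ when P is not absolutely continuous with respect to Q). Equivalently, KL(P‖Q) ≥ log( 1 / (2(P(A) + Q(Aᶜ))) ). -/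
/-!
For `P ≪ Q` with density `f = dP/dQ`, the event `A` costs at least `∫ min(f, 1) dQ`.
Writing `√f = √(min(f, 1)) · √(max(f, 1))`, Cauchy–Schwarz bounds the square of the
Bhattacharyya coefficient `B = ∫ √f dQ` by `∫ min(f, 1) dQ · ∫ max(f, 1) dQ ≤ 2 ∫ min(f, 1) dQ`.
Finally `B = ∫ exp(-llr/2) dP ≥ exp(-KL/2)` by Jensen's inequality for `exp`.
-/

open MeasureTheory ENNReal

open Classical in
/-- The Kullback–Leibler divergence `KL(P‖Q)`, valued in `ℝ≥0∞`: equal to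
`∫ log(dP/dQ) dP` when `P ≪ Q` and the log-likelihood ratio is integrable,
and `+∞` otherwise. -/
noncomputable def klDiv' {Ω : Type*} [MeasurableSpace Ω] (P Q : Measure Ω) : ℝ≥0∞ :=
  if P ≪ Q ∧ Integrable (llr P Q) P then ENNReal.ofReal (∫ ω, llr P Q ω ∂P) else ⊤

/-- `exp(−x)` for `x : ℝ≥0∞`, with the convention `exp(−∞) = 0`. -/
noncomputable def expNeg (x : ℝ≥0∞) : ℝ :=
  if x = ⊤ then 0 else Real.exp (-x.toReal)

namespace MeasureTheory

variable {α : Type*} [MeasurableSpace α] {μ ν : Measure α}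

/-- The Bhattacharyya coefficient `∫ √(dμ dν)`, written with densities relative to `ν`. -/
noncomputable def bhattacharyya (μ ν : Measure α) : ℝ≥0∞ :=
  ∫⁻ x, μ.rnDeriv ν x ^ (2⁻¹ : ℝ) ∂ν

lemma sq_lintegral_rpow_half_le_min_mul_max {f : α → ℝ≥0∞} (hf : AEMeasurable f ν) :
    (∫⁻ x, f x ^ (2⁻¹ : ℝ) ∂ν) ^ 2 ≤ (∫⁻ x, min (f x) 1 ∂ν) * ∫⁻ x, max (f x) 1 ∂ν := by
  have h_split : ∀ x, f x ^ (2⁻¹ : ℝ) = min (f x) 1 ^ (2⁻¹ : ℝ) * max (f x) 1 ^ (2⁻¹ : ℝ) := by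
    intro x
    rw [← ENNReal.mul_rpow_of_nonneg _ _ (by norm_num), min_mul_max, mul_one]
  have h_sq : ∀ a : ℝ≥0∞, (a ^ (2⁻¹ : ℝ)) ^ (2 : ℝ) = a := fun a => by
    rw [← ENNReal.rpow_mul]; norm_num
  have h_cs := ENNReal.lintegral_mul_le_Lp_mul_Lq ν Real.HolderConjugate.two_two
    ((hf.min (aemeasurable_const (b := 1))).pow_const (2⁻¹ : ℝ))
    ((hf.max (aemeasurable_const (b := 1))).pow_const (2⁻¹ : ℝ))
  simp only [Pi.mul_apply, h_sq, ← h_split] at h_cs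
  calc (∫⁻ x, f x ^ (2⁻¹ : ℝ) ∂ν) ^ 2
      ≤ ((∫⁻ x, min (f x) 1 ∂ν) ^ (1 / 2 : ℝ) * (∫⁻ x, max (f x) 1 ∂ν) ^ (1 / 2 : ℝ)) ^ 2 := by
        gcongr
    _ = (∫⁻ x, min (f x) 1 ∂ν) * ∫⁻ x, max (f x) 1 ∂ν := by
        rw [mul_pow, ← ENNReal.rpow_natCast, ← ENNReal.rpow_natCast, ← ENNReal.rpow_mul,
          ← ENNReal.rpow_mul]
        norm_num

lemma sq_bhattacharyya_le :
    bhattacharyya μ ν ^ 2 ≤ (μ Set.univ + ν Set.univ) * ∫⁻ x, min (μ.rnDeriv ν x) 1 ∂ν := by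
  rw [bhattacharyya, mul_comm]
  refine (sq_lintegral_rpow_half_le_min_mul_max
    (Measure.measurable_rnDeriv μ ν).aemeasurable).trans ?_
  gcongr
  calc ∫⁻ x, max (μ.rnDeriv ν x) 1 ∂ν ≤ ∫⁻ x, μ.rnDeriv ν x + 1 ∂ν :=
        lintegral_mono fun x => max_le le_self_add le_add_self
    _ ≤ μ Set.univ + ν Set.univ := by
        rw [lintegral_add_right _ measurable_const, lintegral_one]
        gcongr
        exact Measure.lintegral_rnDeriv_le

lemma lintegral_min_rnDeriv_one_le_add_compl [μ.HaveLebesgueDecomposition ν] (hμν : μ ≪ ν)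
    {A : Set α} (hA : MeasurableSet A) : ∫⁻ x, min (μ.rnDeriv ν x) 1 ∂ν ≤ μ A + ν Aᶜ := by
  rw [← lintegral_add_compl _ hA, ← Measure.setLIntegral_rnDeriv' hμν hA, ← setLIntegral_one]
  gcongr with x _ x _
  · exact min_le_left _ _
  · exact min_le_right _ _

lemma lintegral_inv_rnDeriv_rpow_half [SigmaFinite μ] [μ.HaveLebesgueDecomposition ν]
    (hμν : μ ≪ ν) : ∫⁻ x, (μ.rnDeriv ν x)⁻¹ ^ (2⁻¹ : ℝ) ∂μ = bhattacharyya μ ν := by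
  have h_meas : AEMeasurable (fun x => (μ.rnDeriv ν x)⁻¹ ^ (2⁻¹ : ℝ)) ν := by fun_prop
  rw [← lintegral_rnDeriv_mul hμν h_meas, bhattacharyya]
  refine lintegral_congr_ae ?_
  filter_upwards [Measure.rnDeriv_ne_top μ ν] with x hx_top
  calc μ.rnDeriv ν x * (μ.rnDeriv ν x)⁻¹ ^ (2⁻¹ : ℝ) = μ.rnDeriv ν x ^ (1 + -2⁻¹ : ℝ) := by
        rw [ENNReal.rpow_add_of_add_pos hx_top _ _ (by norm_num), ENNReal.rpow_one,
          ENNReal.inv_rpow, ENNReal.rpow_neg]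
    _ = μ.rnDeriv ν x ^ (2⁻¹ : ℝ) := by norm_num

lemma exp_integral_le_integral_exp [IsProbabilityMeasure μ] {f : α → ℝ} (hf : Integrable f μ)
    (h_exp : Integrable (fun x => Real.exp (f x)) μ) :
    Real.exp (∫ x, f x ∂μ) ≤ ∫ x, Real.exp (f x) ∂μ :=
  convexOn_exp.map_integral_le Real.continuous_exp.continuousOn isClosed_univ
    (.of_forall fun _ => Set.mem_univ _) hf h_exp

lemma exp_neg_llr_div_two_ae_eq [SigmaFinite μ] [μ.HaveLebesgueDecomposition ν] (hμν : μ ≪ ν) :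
    (fun x => Real.exp (-llr μ ν x / 2))
      =ᵐ[μ] fun x => ((μ.rnDeriv ν x)⁻¹ ^ (2⁻¹ : ℝ)).toReal := by
  filter_upwards [Measure.rnDeriv_pos hμν, hμν.ae_le (Measure.rnDeriv_ne_top μ ν)]
    with x h_pos h_top
  have h_pos' : 0 < (μ.rnDeriv ν x).toReal := ENNReal.toReal_pos h_pos.ne' h_top
  rw [← ENNReal.toReal_rpow, ENNReal.toReal_inv, Real.rpow_def_of_pos (inv_pos.2 h_pos'),
    Real.log_inv, llr]
  ring_nf

lemma ofReal_exp_neg_integral_llr_div_two_le_bhattacharyya [IsProbabilityMeasure μ]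
    [μ.HaveLebesgueDecomposition ν] (hμν : μ ≪ ν) (h_int : Integrable (llr μ ν) μ) :
    ENNReal.ofReal (Real.exp (-(∫ x, llr μ ν x ∂μ) / 2)) ≤ bhattacharyya μ ν := by
  rcases eq_or_ne (bhattacharyya μ ν) ⊤ with h_top | h_fin
  · simp [h_top]
  have h_meas : AEMeasurable (fun x => (μ.rnDeriv ν x)⁻¹ ^ (2⁻¹ : ℝ)) μ := by fun_prop
  have h_lint := lintegral_inv_rnDeriv_rpow_half hμν
  have h_ae := exp_neg_llr_div_two_ae_eq hμν
  have h_exp_int : Integrable (fun x => Real.exp (-llr μ ν x / 2)) μ :=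
    (integrable_toReal_of_lintegral_ne_top h_meas (h_lint ▸ h_fin)).congr h_ae.symm
  have h_integral : ∫ x, Real.exp (-llr μ ν x / 2) ∂μ = (bhattacharyya μ ν).toReal := by
    rw [integral_congr_ae h_ae, integral_toReal h_meas (ae_lt_top' h_meas (h_lint ▸ h_fin)),
      h_lint]
  rw [← ENNReal.ofReal_toReal h_fin, ← h_integral, neg_div, ← integral_div, ← integral_neg]
  simp only [neg_div] at h_exp_int ⊢
  exact ENNReal.ofReal_le_ofReal (exp_integral_le_integral_exp (h_int.div_const 2).neg h_exp_int)

end MeasureTheory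

lemma expNeg_ofReal_le (t : ℝ) : expNeg (ENNReal.ofReal t) ≤ Real.exp (-t) := by
  rw [expNeg, if_neg ENNReal.ofReal_ne_top, Real.exp_le_exp, neg_le_neg_iff,
    ENNReal.toReal_ofReal']
  exact le_max_left t 0

/-- The Bretagnolle–Huber ("high-probability Pinsker") inequality: for probability
measures `P, Q` and any measurable event `A`,
`P(A) + Q(Aᶜ) ≥ (1/2)·exp(−KL(P‖Q))`, where `KL(P‖Q) = +∞` (so the right-hand side is `0`)
when `P` is not absolutely continuous with respect to `Q`. -/
theorem bretagnolle_huber {Ω : Type*} [MeasurableSpace Ω]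
    (P Q : Measure Ω) [IsProbabilityMeasure P] [IsProbabilityMeasure Q]
    {A : Set Ω} (hA : MeasurableSet A) :
    ENNReal.ofReal (2⁻¹ * expNeg (klDiv' P Q)) ≤ P A + Q Aᶜ := by
  by_cases h : P ≪ Q ∧ Integrable (llr P Q) P
  swap
  · simp [klDiv', expNeg, h]
  obtain ⟨hPQ, h_int⟩ := h
  set t := ∫ x, llr P Q x ∂P
  have h_kl : klDiv' P Q = ENNReal.ofReal t := if_pos ⟨hPQ, h_int⟩
  have h_exp_sq : Real.exp (-t / 2) ^ 2 = Real.exp (-t) := by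
    rw [← Real.exp_nat_mul]; ring_nf
  calc ENNReal.ofReal (2⁻¹ * expNeg (klDiv' P Q))
      ≤ ENNReal.ofReal (2⁻¹ * Real.exp (-t)) := by
        rw [h_kl]; gcongr; exact expNeg_ofReal_le t
    _ = 2⁻¹ * ENNReal.ofReal (Real.exp (-t / 2)) ^ 2 := by
        rw [← ENNReal.ofReal_pow (Real.exp_pos _).le, h_exp_sq, ENNReal.ofReal_mul (by norm_num),
          ENNReal.ofReal_inv_of_pos two_pos, ENNReal.ofReal_ofNat]
    _ ≤ 2⁻¹ * bhattacharyya P Q ^ 2 := by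
        gcongr; exact ofReal_exp_neg_integral_llr_div_two_le_bhattacharyya hPQ h_int
    _ ≤ 2⁻¹ * ((P Set.univ + Q Set.univ) * ∫⁻ x, min (P.rnDeriv Q x) 1 ∂Q) := by
        gcongr; exact sq_bhattacharyya_le
    _ = ∫⁻ x, min (P.rnDeriv Q x) 1 ∂Q := by
        rw [measure_univ, measure_univ, one_add_one_eq_two,
          ENNReal.inv_mul_cancel_left two_ne_zero ofNat_ne_top]
    _ ≤ P A + Q Aᶜ := lintegral_min_rnDeriv_one_le_add_compl hPQ hA
end
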